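/- Let L be a vector sublattice of ℝ^Ω with 1 ∈ L and φ a positive linear functional on L. Then there exist a positive finitely additive measure m on 2^Ω with L ⊆ L(m), and a unique positive linear functional φ^⊥ on L with φ^⊥(1) = 0, such that φ(f) = φ(1)·m(f) + φ^⊥(f) for all f ∈ L. -/

import Mathlib

open Filter Set

/-- A positive finitely additive set function on `2^Ω`. -/
structure FinAddMeasure (Ω : Type*) where
  μ : Set Ω → ℝ
  nonneg : ∀ E, 0 ≤ μ E
  empty : μ ∅ = 0
  add : ∀ E F : Set Ω, Disjoint E F → μ (E ∪ F) = μ E + μ F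

/-- A finitely additive probability on `2^Ω`. -/
structure FinAddProb (Ω : Type*) extends FinAddMeasure Ω where
  total : μ Set.univ = 1

/-- Lower (simple-function) sums for `f` relative to a set function `μ` defined
on the sets of the family `A`: sums `∑ aᵢ μ(Eᵢ)` with `aᵢ ≥ 0`, `Eᵢ ∈ A` and
`∑ aᵢ 1_{Eᵢ} ≤ f` pointwise. -/
def lowerSums {Ω : Type*} (A : Set (Set Ω)) (μ : Set Ω → ℝ) (f : Ω → ℝ) : Set ℝ :=
  { r | ∃ (n : ℕ) (a : Fin n → ℝ) (E : Fin n → Set Ω),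
      (∀ i, 0 ≤ a i) ∧ (∀ i, E i ∈ A) ∧
      (∀ ω, (∑ i, a i * (E i).indicator (fun _ => (1 : ℝ)) ω) ≤ f ω) ∧
      r = ∑ i, a i * μ (E i) }

/-- `f` is integrable with respect to `μ` (restricted to the family `A`):
the lower sums of the positive and of the negative part are bounded above. -/
def FAIntegrableOn {Ω : Type*} (A : Set (Set Ω)) (μ : Set Ω → ℝ) (f : Ω → ℝ) : Prop :=
  BddAbove (lowerSums A μ (fun ω => max (f ω) 0)) ∧
  BddAbove (lowerSums A μ (fun ω => max (-(f ω)) 0))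

/-- The finitely additive integral `μ(f) = μ(f⁺) - μ(f⁻)` obtained from lower sums. -/
noncomputable def faIntOn {Ω : Type*} (A : Set (Set Ω)) (μ : Set Ω → ℝ) (f : Ω → ℝ) : ℝ :=
  sSup (lowerSums A μ (fun ω => max (f ω) 0)) -
    sSup (lowerSums A μ (fun ω => max (-(f ω)) 0))

/-- Integrability with respect to a finitely additive measure on all of `2^Ω`. -/
def FAIntegrable {Ω : Type*} (m : FinAddMeasure Ω) (f : Ω → ℝ) : Prop :=
  FAIntegrableOn Set.univ m.μ f

/-- The integral with respect to a finitely additive measure on all of `2^Ω`. -/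
noncomputable def faInt {Ω : Type*} (m : FinAddMeasure Ω) (f : Ω → ℝ) : ℝ :=
  faIntOn Set.univ m.μ f

/-!
The bounded elements of `L` are cofinal among all bounded functions, so by the M. Riesz
extension theorem `φ` extends from them to a positive functional `Φ` on the bounded functions;
put `m E = Φ 1_E / φ 1`. Approximating a bounded `h ≥ 0` from below by `ε ⌊h / ε⌋` shows that
the lower sums of `m` for `h` have supremum `Φ h / φ 1`.

Every lower sum of `f ≥ 0` is a lower sum of some truncation `f ⊓ n`, so `m` integrates
`f ≥ 0` in `L` to `(⨆ n, φ (f ⊓ n)) / φ 1`. This bounded part is additive and positively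
homogeneous on the positive cone of `L`, hence extends linearly to `L`, and `φ⊥ = φ - φ 1 • m`
is positive with `φ⊥ 1 = 0`. Conversely such a `φ⊥` vanishes on bounded functions, so any
representing measure again integrates the bounded elements of `L` to `φ / φ 1`, and the same
truncation argument determines its integral on all of `L`.
-/

section Decomposition

variable {Ω : Type*}

structure IsUnitalFunctionLattice (L : Set (Ω → ℝ)) : Prop where
  add_mem : ∀ f ∈ L, ∀ g ∈ L, f + g ∈ L
  smul_mem : ∀ (c : ℝ), ∀ f ∈ L, c • f ∈ L
  max_mem : ∀ f ∈ L, ∀ g ∈ L, (fun ω => max (f ω) (g ω)) ∈ L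
  one_mem : (fun _ => (1 : ℝ)) ∈ L

structure IsPositiveLinearOn (L : Set (Ω → ℝ)) (φ : (Ω → ℝ) → ℝ) : Prop where
  map_add : ∀ f ∈ L, ∀ g ∈ L, φ (f + g) = φ f + φ g
  map_smul : ∀ (c : ℝ), ∀ f ∈ L, φ (c • f) = c * φ f
  nonneg : ∀ f ∈ L, (∀ ω, 0 ≤ f ω) → 0 ≤ φ f

variable {L : Set (Ω → ℝ)} {φ : (Ω → ℝ) → ℝ} {f g : Ω → ℝ}

namespace IsUnitalFunctionLattice

theorem const_mem (hL : IsUnitalFunctionLattice L) (c : ℝ) : (fun _ : Ω => c) ∈ L := by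
  convert hL.smul_mem c _ hL.one_mem using 1
  funext; simp

theorem neg_mem (hL : IsUnitalFunctionLattice L) (hf : f ∈ L) : -f ∈ L := by
  simpa using hL.smul_mem (-1) f hf

theorem sub_mem (hL : IsUnitalFunctionLattice L) (hf : f ∈ L) (hg : g ∈ L) : f - g ∈ L := by
  simpa [sub_eq_add_neg] using hL.add_mem f hf _ (hL.neg_mem hg)

theorem min_mem (hL : IsUnitalFunctionLattice L) (hf : f ∈ L) (hg : g ∈ L) :
    (fun ω => min (f ω) (g ω)) ∈ L := by
  convert hL.neg_mem (hL.max_mem _ (hL.neg_mem hf) _ (hL.neg_mem hg)) using 1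
  funext ω
  simp [max_neg_neg]

theorem zero_mem (hL : IsUnitalFunctionLattice L) : (0 : Ω → ℝ) ∈ L :=
  hL.const_mem 0

theorem min_const_mem (hL : IsUnitalFunctionLattice L) (hf : f ∈ L) (c : ℝ) :
    (fun ω => min (f ω) c) ∈ L :=
  hL.min_mem hf (hL.const_mem c)

theorem posPart_mem (hL : IsUnitalFunctionLattice L) (hf : f ∈ L) : f⁺ ∈ L :=
  hL.max_mem f hf _ (hL.const_mem 0)

theorem negPart_mem (hL : IsUnitalFunctionLattice L) (hf : f ∈ L) : f⁻ ∈ L :=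
  hL.posPart_mem (hL.neg_mem hf)

end IsUnitalFunctionLattice

namespace IsPositiveLinearOn

theorem map_sub (hφ : IsPositiveLinearOn L φ) (hL : IsUnitalFunctionLattice L) (hf : f ∈ L)
    (hg : g ∈ L) : φ (f - g) = φ f - φ g := by
  have := hφ.map_add _ (hL.sub_mem hf hg) g hg
  rw [sub_add_cancel] at this
  linarith

theorem map_zero (hφ : IsPositiveLinearOn L φ) (hL : IsUnitalFunctionLattice L) : φ 0 = 0 := by
  simpa using hφ.map_sub hL hL.one_mem hL.one_mem

theorem map_const (hφ : IsPositiveLinearOn L φ) (hL : IsUnitalFunctionLattice L) (c : ℝ) :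
    φ (fun _ => c) = c * φ (fun _ => 1) := by
  rw [← hφ.map_smul c _ hL.one_mem]
  congr 1
  funext; simp

theorem mono (hφ : IsPositiveLinearOn L φ) (hL : IsUnitalFunctionLattice L) (hf : f ∈ L)
    (hg : g ∈ L) (hfg : ∀ ω, f ω ≤ g ω) : φ f ≤ φ g := by
  have := hφ.nonneg _ (hL.sub_mem hg hf) fun ω => sub_nonneg.2 (hfg ω)
  rw [hφ.map_sub hL hg hf] at this
  linarith

theorem eq_zero_of_abs_le (hφ : IsPositiveLinearOn L φ) (hL : IsUnitalFunctionLattice L)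
    (hφ1 : φ (fun _ => 1) = 0) (hf : f ∈ L) {C : ℝ} (hC : ∀ ω, |f ω| ≤ C) : φ f = 0 := by
  have hle := hφ.mono hL hf (hL.const_mem C) fun ω => (le_abs_self _).trans (hC ω)
  have hge := hφ.mono hL (hL.const_mem (-C)) hf fun ω => neg_le_of_abs_le (hC ω)
  rw [hφ.map_const hL, hφ1, mul_zero] at hle hge
  exact le_antisymm hle hge

end IsPositiveLinearOn

theorem min_add_le_min_add_min {a b c : ℝ} (ha : 0 ≤ a) (hb : 0 ≤ b) (hc : 0 ≤ c) :
    min (a + b) c ≤ min a c + min b c := by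
  simp only [min_def]; split_ifs <;> linarith

noncomputable def truncSup (φ : (Ω → ℝ) → ℝ) (f : Ω → ℝ) : ℝ :=
  ⨆ n : ℕ, φ (fun ω => min (f ω) n)

theorem apply_min_le (hL : IsUnitalFunctionLattice L) (hφ : IsPositiveLinearOn L φ)
    (hf : f ∈ L) (c : ℝ) : φ (fun ω => min (f ω) c) ≤ φ f :=
  hφ.mono hL (hL.min_const_mem hf c) hf fun _ => min_le_left _ _

theorem bddAbove_range_apply_min (hL : IsUnitalFunctionLattice L) (hφ : IsPositiveLinearOn L φ)
    (hf : f ∈ L) : BddAbove (range fun n : ℕ => φ (fun ω => min (f ω) n)) :=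
  ⟨φ f, by rintro _ ⟨n, rfl⟩; exact apply_min_le hL hφ hf n⟩

theorem bddAbove_range_mul_apply_min (hL : IsUnitalFunctionLattice L)
    (hφ : IsPositiveLinearOn L φ) (hf : f ∈ L) {c : ℝ} (hc : 0 ≤ c) :
    BddAbove (range fun n : ℕ => c * φ (fun ω => min (f ω) n)) := by
  simpa [Set.smul_set_range] using (bddAbove_range_apply_min hL hφ hf).smul_of_nonneg hc

theorem apply_min_le_truncSup (hL : IsUnitalFunctionLattice L) (hφ : IsPositiveLinearOn L φ)
    (hf : f ∈ L) (n : ℕ) : φ (fun ω => min (f ω) n) ≤ truncSup φ f :=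
  le_ciSup (bddAbove_range_apply_min hL hφ hf) n

theorem truncSup_le (hL : IsUnitalFunctionLattice L) (hφ : IsPositiveLinearOn L φ)
    (hf : f ∈ L) : truncSup φ f ≤ φ f :=
  ciSup_le fun n => apply_min_le hL hφ hf n

theorem truncSup_eq_of_le (hL : IsUnitalFunctionLattice L) (hφ : IsPositiveLinearOn L φ)
    (hf : f ∈ L) {C : ℝ} (hC : ∀ ω, f ω ≤ C) : truncSup φ f = φ f := by
  refine le_antisymm (truncSup_le hL hφ hf) ?_
  have : (fun ω => min (f ω) ⌈C⌉₊) = f :=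
    funext fun ω => min_eq_left ((hC ω).trans (Nat.le_ceil C))
  simpa [this] using apply_min_le_truncSup hL hφ hf ⌈C⌉₊

theorem truncSup_zero (hL : IsUnitalFunctionLattice L) (hφ : IsPositiveLinearOn L φ) :
    truncSup φ 0 = 0 := by
  rw [truncSup_eq_of_le hL hφ hL.zero_mem (C := 0) fun _ => le_rfl, hφ.map_zero hL]

theorem truncSup_add (hL : IsUnitalFunctionLattice L) (hφ : IsPositiveLinearOn L φ)
    (hf : f ∈ L) (hg : g ∈ L) (hf0 : 0 ≤ f) (hg0 : 0 ≤ g) :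
    truncSup φ (f + g) = truncSup φ f + truncSup φ g := by
  refine le_antisymm (ciSup_le fun n => ?_) (ciSup_add_ciSup_le fun i j => ?_)
  · calc φ (fun ω => min ((f + g) ω) n)
        ≤ φ ((fun ω => min (f ω) n) + fun ω => min (g ω) n) :=
          hφ.mono hL (hL.min_const_mem (hL.add_mem f hf g hg) n)
            (hL.add_mem _ (hL.min_const_mem hf n) _ (hL.min_const_mem hg n))
            fun ω => min_add_le_min_add_min (hf0 ω) (hg0 ω) n.cast_nonneg
      _ = φ (fun ω => min (f ω) n) + φ (fun ω => min (g ω) n) :=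
          hφ.map_add _ (hL.min_const_mem hf n) _ (hL.min_const_mem hg n)
      _ ≤ truncSup φ f + truncSup φ g :=
          add_le_add (apply_min_le_truncSup hL hφ hf n) (apply_min_le_truncSup hL hφ hg n)
  · calc φ (fun ω => min (f ω) i) + φ (fun ω => min (g ω) j)
        = φ ((fun ω => min (f ω) i) + fun ω => min (g ω) j) :=
          (hφ.map_add _ (hL.min_const_mem hf i) _ (hL.min_const_mem hg j)).symm
      _ ≤ φ (fun ω => min ((f + g) ω) ↑(i + j)) :=
          hφ.mono hL (hL.add_mem _ (hL.min_const_mem hf i) _ (hL.min_const_mem hg j))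
            (hL.min_const_mem (hL.add_mem f hf g hg) _) fun ω => by
              push_cast; exact min_add_min_le_min_add_add
      _ ≤ truncSup φ (f + g) := apply_min_le_truncSup hL hφ (hL.add_mem f hf g hg) _

theorem truncSup_smul (hL : IsUnitalFunctionLattice L) (hφ : IsPositiveLinearOn L φ)
    (hf : f ∈ L) {c : ℝ} (hc : 0 ≤ c) : truncSup φ (c • f) = c * truncSup φ f := by
  rcases hc.eq_or_lt with rfl | hc
  · rw [zero_smul, zero_mul, truncSup_zero hL hφ]
  rw [truncSup, truncSup, Real.mul_iSup_of_nonneg hc.le]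
  refine le_antisymm
    (ciSup_mono_of_forall_exists (bddAbove_range_mul_apply_min hL hφ hf hc.le)
      fun n => ⟨⌈n / c⌉₊, ?_⟩)
    (ciSup_mono_of_forall_exists (bddAbove_range_apply_min hL hφ (hL.smul_mem c f hf))
      fun n => ⟨⌈c * n⌉₊, ?_⟩)
  · rw [← hφ.map_smul c _ (hL.min_const_mem hf _)]
    refine hφ.mono hL (hL.min_const_mem (hL.smul_mem c f hf) _)
      (hL.smul_mem c _ (hL.min_const_mem hf _)) fun ω => ?_
    simp only [Pi.smul_apply, smul_eq_mul, mul_min_of_nonneg _ _ hc.le]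
    exact min_le_min_left _ ((div_le_iff₀' hc).1 (Nat.le_ceil _))
  · rw [← hφ.map_smul c _ (hL.min_const_mem hf _)]
    refine hφ.mono hL (hL.smul_mem c _ (hL.min_const_mem hf _))
      (hL.min_const_mem (hL.smul_mem c f hf) _) fun ω => ?_
    simp only [Pi.smul_apply, smul_eq_mul, mul_min_of_nonneg _ _ hc.le]
    exact min_le_min_left _ (Nat.le_ceil _)

noncomputable def boundedPart (φ : (Ω → ℝ) → ℝ) (f : Ω → ℝ) : ℝ :=
  truncSup φ f⁺ - truncSup φ f⁻

theorem boundedPart_sub_of_nonneg (hL : IsUnitalFunctionLattice L)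
    (hφ : IsPositiveLinearOn L φ) (hf : f ∈ L) (hg : g ∈ L) (hf0 : 0 ≤ f) (hg0 : 0 ≤ g) :
    boundedPart φ (f - g) = truncSup φ f - truncSup φ g := by
  have hfg := hL.sub_mem hf hg
  have key : (f - g)⁺ + g = (f - g)⁻ + f := by
    rw [add_comm _ f, ← sub_eq_sub_iff_add_eq_add, posPart_sub_negPart]
  have := congrArg (truncSup φ) key
  rw [truncSup_add hL hφ (hL.posPart_mem hfg) hg (posPart_nonneg _) hg0,
    truncSup_add hL hφ (hL.negPart_mem hfg) hf (negPart_nonneg _) hf0] at this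
  rw [boundedPart]
  linarith

theorem boundedPart_of_nonneg (hL : IsUnitalFunctionLattice L) (hφ : IsPositiveLinearOn L φ)
    (hf : f ∈ L) (hf0 : 0 ≤ f) : boundedPart φ f = truncSup φ f := by
  simpa [truncSup_zero hL hφ] using boundedPart_sub_of_nonneg hL hφ hf hL.zero_mem hf0 le_rfl

theorem boundedPart_add (hL : IsUnitalFunctionLattice L) (hφ : IsPositiveLinearOn L φ)
    (hf : f ∈ L) (hg : g ∈ L) : boundedPart φ (f + g) = boundedPart φ f + boundedPart φ g := by
  have hsplit : f + g = (f⁺ + g⁺) - (f⁻ + g⁻) := by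
    conv_lhs => rw [← posPart_sub_negPart f, ← posPart_sub_negPart g]
    abel
  rw [hsplit, boundedPart_sub_of_nonneg hL hφ
      (hL.add_mem _ (hL.posPart_mem hf) _ (hL.posPart_mem hg))
      (hL.add_mem _ (hL.negPart_mem hf) _ (hL.negPart_mem hg))
      (add_nonneg (posPart_nonneg _) (posPart_nonneg _))
      (add_nonneg (negPart_nonneg _) (negPart_nonneg _)),
    truncSup_add hL hφ (hL.posPart_mem hf) (hL.posPart_mem hg) (posPart_nonneg _)
      (posPart_nonneg _),
    truncSup_add hL hφ (hL.negPart_mem hf) (hL.negPart_mem hg) (negPart_nonneg _)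
      (negPart_nonneg _), boundedPart, boundedPart]
  ring

theorem boundedPart_smul (hL : IsUnitalFunctionLattice L) (hφ : IsPositiveLinearOn L φ)
    (hf : f ∈ L) (c : ℝ) : boundedPart φ (c • f) = c * boundedPart φ f := by
  have hpos := hL.posPart_mem hf
  have hneg := hL.negPart_mem hf
  rcases le_total 0 c with hc | hc
  · have hsplit : c • f = c • f⁺ - c • f⁻ := by rw [← smul_sub, posPart_sub_negPart]
    rw [hsplit, boundedPart_sub_of_nonneg hL hφ (hL.smul_mem c _ hpos) (hL.smul_mem c _ hneg)
      (smul_nonneg hc (posPart_nonneg _)) (smul_nonneg hc (negPart_nonneg _)),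
      truncSup_smul hL hφ hpos hc, truncSup_smul hL hφ hneg hc, boundedPart]
    ring
  · have hc' : 0 ≤ -c := neg_nonneg.2 hc
    have hsplit : c • f = (-c) • f⁻ - (-c) • f⁺ := by
      rw [← smul_sub, ← neg_sub, smul_neg, neg_smul, neg_neg, posPart_sub_negPart]
    rw [hsplit, boundedPart_sub_of_nonneg hL hφ (hL.smul_mem _ _ hneg) (hL.smul_mem _ _ hpos)
      (smul_nonneg hc' (negPart_nonneg _)) (smul_nonneg hc' (posPart_nonneg _)),
      truncSup_smul hL hφ hneg hc', truncSup_smul hL hφ hpos hc', boundedPart]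
    ring

theorem isPositiveLinearOn_sub_boundedPart (hL : IsUnitalFunctionLattice L)
    (hφ : IsPositiveLinearOn L φ) : IsPositiveLinearOn L fun f => φ f - boundedPart φ f where
  map_add f hf g hg := by
    rw [hφ.map_add f hf g hg, boundedPart_add hL hφ hf hg]; ring
  map_smul c f hf := by
    rw [hφ.map_smul c f hf, boundedPart_smul hL hφ hf]; ring
  nonneg f hf hf0 := by
    rw [sub_nonneg, boundedPart_of_nonneg hL hφ hf hf0]
    exact truncSup_le hL hφ hf

theorem boundedPart_one (hL : IsUnitalFunctionLattice L) (hφ : IsPositiveLinearOn L φ) :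
    boundedPart φ (fun _ => 1) = φ (fun _ => 1) := by
  rw [boundedPart_of_nonneg hL hφ hL.one_mem fun _ => zero_le_one,
    truncSup_eq_of_le hL hφ hL.one_mem fun _ => le_rfl]

section lowerSums

variable {A : Set (Set Ω)} {μ : Set Ω → ℝ}

theorem zero_mem_lowerSums (hf : 0 ≤ f) : (0 : ℝ) ∈ lowerSums A μ f :=
  ⟨0, Fin.elim0, Fin.elim0, fun i => i.elim0, fun i => i.elim0, fun ω => by simpa using hf ω,
    by simp⟩

theorem lowerSums_mono (hfg : f ≤ g) : lowerSums A μ f ⊆ lowerSums A μ g := by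
  rintro _ ⟨n, a, E, ha, hE, hle, rfl⟩
  exact ⟨n, a, E, ha, hE, fun ω => (hle ω).trans (hfg ω), rfl⟩

theorem sum_mul_indicator_le_sum {n : ℕ} {a : Fin n → ℝ} (ha : ∀ i, 0 ≤ a i)
    (E : Fin n → Set Ω) (ω : Ω) :
    ∑ i, a i * (E i).indicator (fun _ => (1 : ℝ)) ω ≤ ∑ i, a i :=
  Finset.sum_le_sum fun i _ =>
    mul_le_of_le_one_right (ha i) (indicator_apply_le' (fun _ => le_rfl) fun _ => zero_le_one)

theorem lowerSums_eq_iUnion_min (f : Ω → ℝ) :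
    lowerSums A μ f = ⋃ n : ℕ, lowerSums A μ (fun ω => min (f ω) n) := by
  refine Subset.antisymm ?_ (iUnion_subset fun n => lowerSums_mono fun ω => min_le_left _ _)
  rintro _ ⟨n, a, E, ha, hE, hle, rfl⟩
  exact mem_iUnion.2 ⟨⌈∑ i, a i⌉₊, n, a, E, ha, hE,
    fun ω => le_min (hle ω) ((sum_mul_indicator_le_sum ha E ω).trans (Nat.le_ceil _)), rfl⟩

theorem isLUB_lowerSums_of_isLUB_min {F : ℕ → ℝ} {s : ℝ}
    (hF : ∀ n : ℕ, IsLUB (lowerSums A μ (fun ω => min (f ω) n)) (F n))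
    (hs : IsLUB (range F) s) : IsLUB (lowerSums A μ f) s := by
  rw [lowerSums_eq_iUnion_min]
  exact (isLUB_iUnion_iff_of_isLUB hF s).1 hs

theorem lowerSums_zero (hμ : μ ∅ = 0) : lowerSums A μ 0 = {0} := by
  refine eq_singleton_iff_unique_mem.2 ⟨zero_mem_lowerSums le_rfl, ?_⟩
  rintro _ ⟨n, a, E, ha, -, hle, rfl⟩
  refine Finset.sum_eq_zero fun i _ => ?_
  rcases (E i).eq_empty_or_nonempty with hE | ⟨ω, hω⟩
  · rw [hE, hμ, mul_zero]
  · have hai := (Finset.single_le_sum (fun j _ => mul_nonneg (ha j)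
      (indicator_nonneg (fun _ _ => zero_le_one) ω)) (Finset.mem_univ i)).trans (hle ω)
    rw [indicator_of_mem hω, mul_one] at hai
    rw [le_antisymm hai (ha i), Pi.zero_apply, zero_mul]

theorem faIntOn_of_nonneg (hμ : μ ∅ = 0) (hf : 0 ≤ f) :
    faIntOn A μ f = sSup (lowerSums A μ f) := by
  change sSup (lowerSums A μ f⁺) - sSup (lowerSums A μ f⁻) = _
  rw [posPart_eq_self.2 hf, negPart_eq_zero.2 hf, lowerSums_zero hμ, csSup_singleton, sub_zero]

end lowerSums

variable (Ω) in
def boundedFunctions : Submodule ℝ (Ω → ℝ) where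
  carrier := {f | ∃ C, ∀ ω, |f ω| ≤ C}
  add_mem' := by
    rintro f g ⟨C, hC⟩ ⟨D, hD⟩
    exact ⟨C + D, fun ω => (abs_add_le _ _).trans (add_le_add (hC ω) (hD ω))⟩
  zero_mem' := ⟨0, fun ω => by simp⟩
  smul_mem' := by
    rintro c f ⟨C, hC⟩
    exact ⟨|c| * C, fun ω => by
      simpa [abs_mul] using mul_le_mul_of_nonneg_left (hC ω) (abs_nonneg c)⟩

noncomputable def indicatorOne (s : Set Ω) : boundedFunctions Ω :=
  ⟨s.indicator fun _ => 1, 1, fun ω => by by_cases h : ω ∈ s <;> simp [h]⟩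

@[simp]
theorem coe_indicatorOne (s : Set Ω) : (indicatorOne s : Ω → ℝ) = s.indicator fun _ => 1 :=
  rfl

theorem coe_sum_smul_indicatorOne {n : ℕ} (a : Fin n → ℝ) (E : Fin n → Set Ω) (ω : Ω) :
    ((∑ i, a i • indicatorOne (E i) : boundedFunctions Ω) : Ω → ℝ) ω
      = ∑ i, a i * (E i).indicator (fun _ => (1 : ℝ)) ω := by
  simp [Finset.sum_apply]

section PositiveFunctional

variable {Φ : boundedFunctions Ω →ₗ[ℝ] ℝ}

noncomputable def FinAddMeasure.ofPositive (hΦ : ∀ x, 0 ≤ x → 0 ≤ Φ x) : FinAddMeasure Ω where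
  μ s := Φ (indicatorOne s)
  nonneg s := hΦ _ fun ω => indicator_nonneg (fun _ _ => zero_le_one) ω
  empty := by
    rw [show indicatorOne (∅ : Set Ω) = 0 from Subtype.ext (indicator_empty _), map_zero]
  add s t h := by
    rw [show indicatorOne (s ∪ t) = indicatorOne s + indicatorOne t from
      Subtype.ext (indicator_union_of_disjoint h _), map_add]

theorem map_sum_smul_indicatorOne {n : ℕ} (hΦ : ∀ x, 0 ≤ x → 0 ≤ Φ x) (a : Fin n → ℝ)
    (E : Fin n → Set Ω) :
    Φ (∑ i, a i • indicatorOne (E i)) = ∑ i, a i * (FinAddMeasure.ofPositive hΦ).μ (E i) := by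
  simp [FinAddMeasure.ofPositive]

theorem le_of_mem_lowerSums_ofPositive (hΦ : ∀ x, 0 ≤ x → 0 ≤ Φ x) {A : Set (Set Ω)}
    {h : boundedFunctions Ω} {r : ℝ}
    (hr : r ∈ lowerSums A (FinAddMeasure.ofPositive hΦ).μ h) : r ≤ Φ h := by
  obtain ⟨n, a, E, -, -, hle, rfl⟩ := hr
  rw [← map_sum_smul_indicatorOne hΦ]
  exact (monotone_iff_map_nonneg Φ).2 hΦ fun ω =>
    (coe_sum_smul_indicatorOne a E ω).trans_le (hle ω)

theorem sum_mul_indicator_fiber_eq {u : Ω → ℕ} {N : ℕ} (hu : ∀ ω, u ω < N) (ε : ℝ) (ω : Ω) :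
    ∑ k : Fin N, (k * ε) * {ω' | u ω' = k}.indicator (fun _ => (1 : ℝ)) ω = u ω * ε := by
  rw [Finset.sum_eq_single ⟨u ω, hu ω⟩]
  · simp
  · rintro k - hk
    rw [indicator_of_notMem fun h => hk (Fin.ext h.symm), mul_zero]
  · simp

theorem exists_mem_lowerSums_ofPositive_le_add (hΦ : ∀ x, 0 ≤ x → 0 ≤ Φ x)
    {h : boundedFunctions Ω} (h0 : 0 ≤ h) {δ : ℝ} (hδ : 0 < δ) :
    ∃ r ∈ lowerSums univ (FinAddMeasure.ofPositive hΦ).μ h, Φ h ≤ r + δ := by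
  obtain ⟨C, hC⟩ := h.2
  have hΦ1 : 0 ≤ Φ (indicatorOne univ) := hΦ _ fun ω => by simp
  set ε := δ / (Φ (indicatorOne univ) + 1)
  have hε : 0 < ε := div_pos hδ (by linarith)
  have hεΦ1 : ε * Φ (indicatorOne univ) ≤ δ := by
    calc ε * Φ (indicatorOne univ) ≤ ε * (Φ (indicatorOne univ) + 1) := by linarith
      _ = δ := div_mul_cancel₀ _ (by linarith)
  -- approximate `h` from below by the step function `ε * ⌊h / ε⌋₊`
  have hu : ∀ ω, ⌊(h : Ω → ℝ) ω / ε⌋₊ < ⌊C / ε⌋₊ + 1 := fun ω =>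
    Nat.lt_succ_of_le <| Nat.floor_le_floor <|
      div_le_div_of_nonneg_right ((le_abs_self _).trans (hC ω)) hε.le
  set E : Fin (⌊C / ε⌋₊ + 1) → Set Ω := fun k => {ω | ⌊(h : Ω → ℝ) ω / ε⌋₊ = k}
  set a : Fin (⌊C / ε⌋₊ + 1) → ℝ := fun k => k * ε
  have hs : ∀ ω, ((∑ k, a k • indicatorOne (E k) : boundedFunctions Ω) : Ω → ℝ) ω
      = ⌊(h : Ω → ℝ) ω / ε⌋₊ * ε :=
    fun ω => (coe_sum_smul_indicatorOne a E ω).trans (sum_mul_indicator_fiber_eq hu ε ω)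
  refine ⟨_, ⟨_, a, E, fun k => by positivity, fun _ => mem_univ _, fun ω => ?_, rfl⟩, ?_⟩
  · rw [← coe_sum_smul_indicatorOne, hs]
    exact (le_div_iff₀ hε).1 (Nat.floor_le (div_nonneg (h0 ω) hε.le))
  · rw [← map_sum_smul_indicatorOne hΦ]
    calc Φ h ≤ Φ ((∑ k, a k • indicatorOne (E k)) + ε • indicatorOne univ) :=
          (monotone_iff_map_nonneg Φ).2 hΦ fun ω => by
            have := (div_lt_iff₀ hε).1 (Nat.lt_floor_add_one ((h : Ω → ℝ) ω / ε))
            simp only [Submodule.coe_add, Pi.add_apply, Submodule.coe_smul, Pi.smul_apply, hs,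
              coe_indicatorOne, indicator_univ, smul_eq_mul, mul_one]
            linarith
      _ ≤ _ := by rw [map_add, map_smul, smul_eq_mul]; linarith

theorem isLUB_lowerSums_ofPositive (hΦ : ∀ x, 0 ≤ x → 0 ≤ Φ x) {h : boundedFunctions Ω}
    (h0 : 0 ≤ h) : IsLUB (lowerSums univ (FinAddMeasure.ofPositive hΦ).μ h) (Φ h) :=
  ⟨fun _ hr => le_of_mem_lowerSums_ofPositive hΦ hr, fun _ hb =>
    le_of_forall_pos_le_add fun δ hδ =>
      let ⟨_, hr, hle⟩ := exists_mem_lowerSums_ofPositive_le_add hΦ h0 hδ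
      hle.trans ((add_le_add_iff_right δ).2 (hb hr))⟩

end PositiveFunctional

theorem IsPositiveLinearOn.exists_extension (hφ : IsPositiveLinearOn L φ)
    (hL : IsUnitalFunctionLattice L) :
    ∃ Φ : boundedFunctions Ω →ₗ[ℝ] ℝ,
      (∀ x, 0 ≤ x → 0 ≤ Φ x) ∧ ∀ x : boundedFunctions Ω, (x : Ω → ℝ) ∈ L → Φ x = φ x := by
  let D : Submodule ℝ (boundedFunctions Ω) :=
    { carrier := {x | (x : Ω → ℝ) ∈ L}
      add_mem' := fun hx hy => hL.add_mem _ hx _ hy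
      zero_mem' := hL.zero_mem
      smul_mem' := fun c _ hx => hL.smul_mem c _ hx }
  let φD : D →ₗ[ℝ] ℝ :=
    { toFun := fun x => φ x
      map_add' := fun x y => hφ.map_add _ x.2 _ y.2
      map_smul' := fun c x => hφ.map_smul c _ x.2 }
  -- the constants lie in `L` and dominate every bounded function
  obtain ⟨Φ, hΦφ, hΦ⟩ := riesz_extension
    ((PointedCone.positive ℝ (Ω → ℝ)).comap (boundedFunctions Ω).subtype) ⟨D, φD⟩
    (fun x hx => hφ.nonneg _ x.2 hx) fun y => by
      obtain ⟨C, hC⟩ := y.2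
      exact ⟨⟨⟨fun _ => C, |C|, fun _ => le_rfl⟩, hL.const_mem C⟩,
        fun ω => by simpa using neg_le_iff_add_nonneg'.1 (neg_le_of_abs_le (hC ω))⟩
  exact ⟨Φ, hΦ, fun x hx => hΦφ ⟨x, hx⟩⟩

section Representation

variable {A : Set (Set Ω)} {μ : Set Ω → ℝ} {c : ℝ}

theorem isLUB_lowerSums_truncSup (hL : IsUnitalFunctionLattice L) (hφ : IsPositiveLinearOn L φ)
    (hc : 0 ≤ c)
    (hμ : ∀ g ∈ L, 0 ≤ g → g ∈ boundedFunctions Ω → IsLUB (lowerSums A μ g) (c * φ g))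
    (hf : f ∈ L) (hf0 : 0 ≤ f) : IsLUB (lowerSums A μ f) (c * truncSup φ f) := by
  refine isLUB_lowerSums_of_isLUB_min (F := fun n : ℕ => c * φ fun ω => min (f ω) n)
    (fun n => ?_) ?_
  · have h0 : 0 ≤ fun ω => min (f ω) (n : ℝ) := fun ω => le_min (hf0 ω) n.cast_nonneg
    exact hμ _ (hL.min_const_mem hf n) h0
      ⟨n, fun ω => abs_le.2 ⟨(neg_nonpos.2 n.cast_nonneg).trans (h0 ω), min_le_right _ _⟩⟩
  rw [truncSup, Real.mul_iSup_of_nonneg hc]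
  exact isLUB_ciSup (bddAbove_range_mul_apply_min hL hφ hf hc)

theorem faIntOn_eq_mul_boundedPart (hL : IsUnitalFunctionLattice L)
    (hφ : IsPositiveLinearOn L φ) (hc : 0 ≤ c)
    (hμ : ∀ g ∈ L, 0 ≤ g → g ∈ boundedFunctions Ω → IsLUB (lowerSums A μ g) (c * φ g))
    (hf : f ∈ L) : FAIntegrableOn A μ f ∧ faIntOn A μ f = c * boundedPart φ f := by
  have hpos := isLUB_lowerSums_truncSup hL hφ hc hμ (hL.posPart_mem hf) (posPart_nonneg f)
  have hneg := isLUB_lowerSums_truncSup hL hφ hc hμ (hL.negPart_mem hf) (negPart_nonneg f)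
  refine ⟨⟨hpos.bddAbove, hneg.bddAbove⟩, ?_⟩
  change sSup (lowerSums A μ f⁺) - sSup (lowerSums A μ f⁻) = _
  rw [hpos.csSup_eq ⟨0, zero_mem_lowerSums (posPart_nonneg f)⟩,
    hneg.csSup_eq ⟨0, zero_mem_lowerSums (negPart_nonneg f)⟩, boundedPart, mul_sub]

end Representation

theorem IsPositiveLinearOn.exists_finAddMeasure_isLUB_lowerSums (hφ : IsPositiveLinearOn L φ)
    (hL : IsUnitalFunctionLattice L) :
    ∃ m : FinAddMeasure Ω, ∀ g ∈ L, 0 ≤ g → g ∈ boundedFunctions Ω →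
      IsLUB (lowerSums univ m.μ g) ((φ fun _ => 1)⁻¹ * φ g) := by
  obtain ⟨Φ, hΦ, hΦφ⟩ := hφ.exists_extension hL
  have hφ1 : 0 ≤ (φ fun _ => 1)⁻¹ := inv_nonneg.2 (hφ.nonneg _ hL.one_mem fun _ => zero_le_one)
  have hΦ' : ∀ x, 0 ≤ x → 0 ≤ ((φ fun _ => 1)⁻¹ • Φ) x := fun x hx =>
    smul_nonneg hφ1 (hΦ x hx)
  refine ⟨FinAddMeasure.ofPositive hΦ', fun g hg hg0 hgb => ?_⟩
  simpa [hΦφ ⟨g, hgb⟩ hg] using isLUB_lowerSums_ofPositive hΦ' (h := ⟨g, hgb⟩) hg0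

theorem isLUB_lowerSums_of_decomposition (hL : IsUnitalFunctionLattice L) {ψ : (Ω → ℝ) → ℝ}
    (hψ : IsPositiveLinearOn L ψ) (hψ1 : ψ (fun _ => 1) = 0) (hφ1 : φ (fun _ => 1) ≠ 0)
    (v : FinAddMeasure Ω) (hvint : ∀ f ∈ L, FAIntegrable v f)
    (hv : ∀ f ∈ L, φ f = φ (fun _ => 1) * faInt v f + ψ f) :
    ∀ g ∈ L, 0 ≤ g → g ∈ boundedFunctions Ω →
      IsLUB (lowerSums univ v.μ g) ((φ fun _ => 1)⁻¹ * φ g) := by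
  rintro g hg hg0 ⟨C, hC⟩
  have hbdd : BddAbove (lowerSums univ v.μ g) := by
    have := (hvint g hg).1
    rwa [show (fun ω => max (g ω) 0) = g from posPart_eq_self.2 hg0] at this
  have hfa : faInt v g = (φ fun _ => 1)⁻¹ * φ g := by
    rw [eq_inv_mul_iff_mul_eq₀ hφ1, hv g hg, hψ.eq_zero_of_abs_le hL hψ1 hg hC, add_zero]
  rw [← hfa, faInt, faIntOn_of_nonneg v.empty hg0]
  exact isLUB_csSup ⟨0, zero_mem_lowerSums hg0⟩ hbdd

end Decomposition

theorem riesz_decomposition_general {Ω : Type*}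
    (L : Set (Ω → ℝ))
    (hLadd : ∀ f ∈ L, ∀ g ∈ L, f + g ∈ L)
    (hLsmul : ∀ (c : ℝ), ∀ f ∈ L, c • f ∈ L)
    (hLsup : ∀ f ∈ L, ∀ g ∈ L, (fun ω => max (f ω) (g ω)) ∈ L)
    (h1 : (fun _ => (1 : ℝ)) ∈ L)
    (φ : (Ω → ℝ) → ℝ)
    (hφadd : ∀ f ∈ L, ∀ g ∈ L, φ (f + g) = φ f + φ g)
    (hφsmul : ∀ (c : ℝ), ∀ f ∈ L, φ (c • f) = c * φ f)
    (hφpos : ∀ f ∈ L, (∀ ω, 0 ≤ f ω) → 0 ≤ φ f) :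
    ∃ φp : (Ω → ℝ) → ℝ,
      ((∀ f ∈ L, ∀ g ∈ L, φp (f + g) = φp f + φp g) ∧
       (∀ (c : ℝ), ∀ f ∈ L, φp (c • f) = c * φp f) ∧
       (∀ f ∈ L, (∀ ω, 0 ≤ f ω) → 0 ≤ φp f) ∧
       φp (fun _ => (1 : ℝ)) = 0) ∧
      (∃ m : FinAddMeasure Ω, (∀ f ∈ L, FAIntegrable m f) ∧
        ∀ f ∈ L, φ f = φ (fun _ => (1 : ℝ)) * faInt m f + φp f) ∧
      (∀ ψp : (Ω → ℝ) → ℝ,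
        ((∀ f ∈ L, ∀ g ∈ L, ψp (f + g) = ψp f + ψp g) ∧
         (∀ (c : ℝ), ∀ f ∈ L, ψp (c • f) = c * ψp f) ∧
         (∀ f ∈ L, (∀ ω, 0 ≤ f ω) → 0 ≤ ψp f) ∧
         ψp (fun _ => (1 : ℝ)) = 0) →
        (∃ v : FinAddMeasure Ω, (∀ f ∈ L, FAIntegrable v f) ∧
          ∀ f ∈ L, φ f = φ (fun _ => (1 : ℝ)) * faInt v f + ψp f) →
        ∀ f ∈ L, ψp f = φp f) := by
  have hL : IsUnitalFunctionLattice L := ⟨hLadd, hLsmul, hLsup, h1⟩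
  have hφ : IsPositiveLinearOn L φ := ⟨hφadd, hφsmul, hφpos⟩
  have hφ1 : 0 ≤ φ fun _ => 1 := hφ.nonneg _ h1 fun _ => zero_le_one
  obtain ⟨m, hm⟩ := hφ.exists_finAddMeasure_isLUB_lowerSums hL
  have hmφ := fun f (hf : f ∈ L) =>
    faIntOn_eq_mul_boundedPart hL hφ (inv_nonneg.2 hφ1) hm hf
  rcases hφ1.eq_or_lt with hφ1 | hφ1
  · refine ⟨φ, ⟨hφadd, hφsmul, hφpos, hφ1.symm⟩,
      ⟨m, fun f hf => (hmφ f hf).1, fun f _ => by rw [← hφ1, zero_mul, zero_add]⟩,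
      fun ψ _ ⟨v, _, hv⟩ f hf => by rw [hv f hf, ← hφ1, zero_mul, zero_add]⟩
  have hφp := isPositiveLinearOn_sub_boundedPart hL hφ
  refine ⟨fun f => φ f - boundedPart φ f,
    ⟨hφp.map_add, hφp.map_smul, hφp.nonneg, sub_eq_zero.2 (boundedPart_one hL hφ).symm⟩,
    ⟨m, fun f hf => (hmφ f hf).1, fun f hf => ?_⟩, ?_⟩
  · rw [faInt, (hmφ f hf).2, mul_inv_cancel_left₀ hφ1.ne']
    ring
  · rintro ψ ⟨hψadd, hψsmul, hψpos, hψ1⟩ ⟨v, hvint, hv⟩ f hf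
    have hvφ := faIntOn_eq_mul_boundedPart hL hφ (inv_nonneg.2 hφ1.le)
      (isLUB_lowerSums_of_decomposition hL ⟨hψadd, hψsmul, hψpos⟩ hψ1 hφ1.ne' v hvint hv) hf
    have hdec := hv f hf
    rw [faInt, hvφ.2, mul_inv_cancel_left₀ hφ1.ne'] at hdec
    simp only [hdec, add_sub_cancel_left]

/-- Riesz decomposition: for a positive linear functional `φ`
on a vector sublattice `L ⊆ ℝ^Ω` with `1 ∈ L`, there are `m ∈ ba₊` with
`L ⊆ L(m)` and a unique positive linear `φ⊥` on `L` with `φ⊥(1) = 0` such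
that `φ(f) = φ(1)·m(f) + φ⊥(f)` for all `f ∈ L` (unique among those admitting
such a decomposition with some positive representing measure). -/
theorem riesz_decomposition {Ω : Type*} [Nonempty Ω]
    (L : Set (Ω → ℝ))
    (hLadd : ∀ f ∈ L, ∀ g ∈ L, f + g ∈ L)
    (hLsmul : ∀ (c : ℝ), ∀ f ∈ L, c • f ∈ L)
    (hLsup : ∀ f ∈ L, ∀ g ∈ L, (fun ω => max (f ω) (g ω)) ∈ L)
    (h1 : (fun _ => (1 : ℝ)) ∈ L)
    (φ : (Ω → ℝ) → ℝ)
    (hφadd : ∀ f ∈ L, ∀ g ∈ L, φ (f + g) = φ f + φ g)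
    (hφsmul : ∀ (c : ℝ), ∀ f ∈ L, φ (c • f) = c * φ f)
    (hφpos : ∀ f ∈ L, (∀ ω, 0 ≤ f ω) → 0 ≤ φ f) :
    ∃ φp : (Ω → ℝ) → ℝ,
      ((∀ f ∈ L, ∀ g ∈ L, φp (f + g) = φp f + φp g) ∧
       (∀ (c : ℝ), ∀ f ∈ L, φp (c • f) = c * φp f) ∧
       (∀ f ∈ L, (∀ ω, 0 ≤ f ω) → 0 ≤ φp f) ∧
       φp (fun _ => (1 : ℝ)) = 0) ∧
      (∃ m : FinAddMeasure Ω, (∀ f ∈ L, FAIntegrable m f) ∧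
        ∀ f ∈ L, φ f = φ (fun _ => (1 : ℝ)) * faInt m f + φp f) ∧
      (∀ ψp : (Ω → ℝ) → ℝ,
        ((∀ f ∈ L, ∀ g ∈ L, ψp (f + g) = ψp f + ψp g) ∧
         (∀ (c : ℝ), ∀ f ∈ L, ψp (c • f) = c * ψp f) ∧
         (∀ f ∈ L, (∀ ω, 0 ≤ f ω) → 0 ≤ ψp f) ∧
         ψp (fun _ => (1 : ℝ)) = 0) →
        (∃ v : FinAddMeasure Ω, (∀ f ∈ L, FAIntegrable v f) ∧
          ∀ f ∈ L, φ f = φ (fun _ => (1 : ℝ)) * faInt v f + ψp f) →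
        ∀ f ∈ L, ψp f = φp f) :=
  riesz_decomposition_general L hLadd hLsmul hLsup h1 φ hφadd hφsmul hφpos
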